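/- For integers n ≥ n_1 + n_2 with n_1 ≥ 1 and n_2 ≥ 0, the following identity of polynomials in the variable w holds: Σ_m R(n; n_1, n_2; m) w^m = C(n, n_1) · ((1+w)^{n_1} − 1)^{n_2} · (1+w)^{n_1 (n − n_1 − n_2)} · Σ_m D(n − n_1, m, n_2) w^m, where R(n; n_1, n_2; m) is the number of labelled DAGs on n vertices with m edges whose root-layering has first layer of size n_1 and second layer of size n_2 (for n = n_1, take n_2 = 0 and the second-layer condition vacuous). -/

import Mathlib

/-- A finite labelled digraph (edge set on `Fin n`) is acyclic if the transitive
closure of its edge relation is irreflexive. -/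
def DAcyclic {n : ℕ} (E : Finset (Fin n × Fin n)) : Prop :=
  Irreflexive (Relation.TransGen fun a b => (a, b) ∈ E)

/-- Sources of a digraph: vertices with no incoming edge. -/
def dagSources {n : ℕ} (E : Finset (Fin n × Fin n)) : Finset (Fin n) :=
  Finset.univ.filter fun v => ∀ u, (u, v) ∉ E

/-- Sources of the induced subgraph on a vertex subset `V`. -/
def sourcesIn {n : ℕ} (E : Finset (Fin n × Fin n)) (V : Finset (Fin n)) : Finset (Fin n) :=
  V.filter fun v => ∀ u ∈ V, (u, v) ∉ E

/-- Vertices remaining after peeling `k` layers of the root-layering. -/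
def dagRemaining {n : ℕ} (E : Finset (Fin n × Fin n)) : ℕ → Finset (Fin n)
  | 0 => Finset.univ
  | k + 1 => dagRemaining E k \ sourcesIn E (dagRemaining E k)

/-- The `k`-th layer (0-indexed) of the root-layering. -/
def dagLayer {n : ℕ} (E : Finset (Fin n × Fin n)) (k : ℕ) : Finset (Fin n) :=
  sourcesIn E (dagRemaining E k)

open Classical in
/-- `Dcount n m k` = number of labelled DAGs on `n` vertices with `m` edges and
exactly `k` sources. -/
noncomputable def Dcount (n m k : ℕ) : ℕ :=
  (Finset.univ.filter fun E : Finset (Fin n × Fin n) =>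
    DAcyclic E ∧ E.card = m ∧ (dagSources E).card = k).card

open Classical in
/-- `Rcount n n1 n2 m` = number of labelled DAGs on `n` vertices with `m` edges whose
root-layering has first layer of size `n1` and second layer of size `n2`. -/
noncomputable def Rcount (n n1 n2 m : ℕ) : ℕ :=
  (Finset.univ.filter fun E : Finset (Fin n × Fin n) =>
    DAcyclic E ∧ E.card = m ∧ (dagLayer E 0).card = n1 ∧ (dagLayer E 1).card = n2).card

/-!
No edge enters a source, so a DAG whose first layer is `S` has edge set `A ∪ B` with
`A ⊆ S × Sᶜ` and `B ⊆ Sᶜ × Sᶜ`. Then `A ∪ B` is acyclic iff `B` is, its second layer is the set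
of sources of `B` inside `Sᶜ`, and its first layer is exactly `S` iff every such source receives
an edge from `S`. For fixed `B`, the sum of `w ^ #A` over the admissible `A` factorises over the
vertices of `Sᶜ`: a source of `B` contributes `(1 + w) ^ #S - 1` (a nonempty set of in-neighbours
in `S`), every other vertex `(1 + w) ^ #S`. Relabelling `Sᶜ` as `Fin (n - #S)` and summing over the
`n.choose n1` choices of `S` gives the identity.
-/

open Finset

section Powerset

variable {α : Type*}

theorem Finset.sum_powerset_union_of_disjoint [DecidableEq α] {M : Type*} [AddCommMonoid M]
    {s t : Finset α} (h : Disjoint s t) (f : Finset α → M) :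
    ∑ u ∈ (s ∪ t).powerset, f u = ∑ a ∈ s.powerset, ∑ b ∈ t.powerset, f (a ∪ b) := by
  have hunion : (s ∪ t).powerset = (s.powerset ×ˢ t.powerset).image fun p => p.1 ∪ p.2 := by
    rw [powerset_union]
    exact (image_uncurry_product _ _ _).symm
  rw [hunion, sum_image, sum_product]
  rintro ⟨a, b⟩ hab ⟨a', b'⟩ hab' heq
  simp only [coe_product, Set.mem_prod, mem_coe, mem_powerset] at hab hab' heq
  have hs : ∀ {a b : Finset α}, a ⊆ s → b ⊆ t → (a ∪ b) ∩ s = a := fun ha hb => by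
    rw [union_inter_distrib_right, inter_eq_left.2 ha,
      disjoint_iff_inter_eq_empty.1 (disjoint_of_subset_left hb h.symm), union_empty]
  have ht : ∀ {a b : Finset α}, a ⊆ s → b ⊆ t → (a ∪ b) ∩ t = b := fun ha hb => by
    rw [union_inter_distrib_right, inter_eq_left.2 hb,
      disjoint_iff_inter_eq_empty.1 (disjoint_of_subset_left ha h), empty_union]
  exact Prod.ext (by rw [← hs hab.1 hab.2, heq, hs hab'.1 hab'.2])
    (by rw [← ht hab.1 hab.2, heq, ht hab'.1 hab'.2])

variable {K : Type*} [CommRing K]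

theorem Finset.sum_powerset_pow_card (s : Finset α) (w : K) :
    ∑ a ∈ s.powerset, w ^ #a = (1 + w) ^ #s := by
  simpa using (prod_one_add (f := fun _ => w) s).symm

theorem Finset.sum_powerset_ite_nonempty_pow_card (s : Finset α) (w : K) :
    ∑ a ∈ s.powerset, (if a.Nonempty then w ^ #a else 0) = (1 + w) ^ #s - 1 := by
  classical
  rw [eq_sub_iff_add_eq, ← sum_powerset_pow_card, ← sum_erase_add _ _ (empty_mem_powerset s),
    ← sum_erase_add s.powerset _ (empty_mem_powerset s)]
  simp only [Finset.not_nonempty_empty, if_false, card_empty, pow_zero, add_zero]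
  congr 1
  apply sum_congr rfl
  intro a ha
  exact if_pos (nonempty_iff_ne_empty.2 (mem_erase.1 ha).1)

variable {β : Type*} [DecidableEq α] [DecidableEq β]

theorem Finset.forall_mem_insert_exists_mem_union_iff {s : Finset α} {a : β} {t R : Finset β}
    (ha : a ∉ t) {A B : Finset (α × β)} (hA : A ⊆ s ×ˢ {a}) (hB : B ⊆ s ×ˢ t) :
    (∀ v ∈ insert a t, v ∈ R → ∃ u ∈ s, (u, v) ∈ A ∪ B) ↔
      (a ∈ R → A.Nonempty) ∧ ∀ v ∈ t, v ∈ R → ∃ u ∈ s, (u, v) ∈ B := by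
  have hAa : ∀ p ∈ A, p.2 = a := fun p hp => by simpa using (mem_product.1 (hA hp)).2
  have hBt : ∀ p ∈ B, p.2 ∈ t := fun p hp => (mem_product.1 (hB hp)).2
  rw [forall_mem_insert]
  refine and_congr (imp_congr_right fun _ => ⟨?_, ?_⟩)
    (forall₂_congr fun v hv => imp_congr_right fun _ => exists_congr fun u => ?_)
  · rintro ⟨u, -, hu⟩
    rcases mem_union.1 hu with hu | hu
    · exact ⟨_, hu⟩
    · exact absurd (hBt _ hu) ha
  · rintro ⟨⟨u, v⟩, hp⟩
    obtain rfl : v = a := hAa _ hp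
    exact ⟨u, (mem_product.1 (hA hp)).1, mem_union_left _ hp⟩
  · refine and_congr_right fun _ => ⟨fun h => ?_, mem_union_right _⟩
    rcases mem_union.1 h with h | h
    · exact absurd (hAa _ h ▸ hv) ha
    · exact h

theorem Finset.sum_powerset_product_ite_forall_exists (s : Finset α) (t R : Finset β) (w : K) :
    ∑ F ∈ (s ×ˢ t).powerset, (if ∀ v ∈ t, v ∈ R → ∃ u ∈ s, (u, v) ∈ F then w ^ #F else 0)
      = ∏ v ∈ t, if v ∈ R then (1 + w) ^ #s - 1 else (1 + w) ^ #s := by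
  induction t using Finset.induction_on with
  | empty => simp
  | @insert a t ha ih =>
    have hsplit : s ×ˢ insert a t = s ×ˢ {a} ∪ s ×ˢ t := by rw [insert_eq, product_union]
    have hdisj : Disjoint (s ×ˢ {a}) (s ×ˢ t) :=
      disjoint_product.2 (Or.inr (disjoint_singleton_left.2 ha))
    have hfactor : ∀ A ∈ (s ×ˢ {a}).powerset, ∀ B ∈ (s ×ˢ t).powerset,
        (if ∀ v ∈ insert a t, v ∈ R → ∃ u ∈ s, (u, v) ∈ A ∪ B then w ^ #(A ∪ B) else 0)
          = (if a ∈ R → A.Nonempty then w ^ #A else 0)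
            * (if ∀ v ∈ t, v ∈ R → ∃ u ∈ s, (u, v) ∈ B then w ^ #B else 0) := by
      intro A hA B hB
      rw [mem_powerset] at hA hB
      rw [ite_zero_mul_ite_zero, ← pow_add, ← card_union_of_disjoint
        (disjoint_of_subset_left hA (disjoint_of_subset_right hB hdisj))]
      exact if_congr (forall_mem_insert_exists_mem_union_iff ha hA hB) rfl rfl
    rw [hsplit, sum_powerset_union_of_disjoint hdisj,
      sum_congr rfl fun A hA => sum_congr rfl (hfactor A hA), ← sum_mul_sum, ih, prod_insert ha]
    congr 1
    by_cases haR : a ∈ R <;>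
      simp [haR, sum_powerset_ite_nonempty_pow_card, sum_powerset_pow_card]

theorem Finset.sum_powerset_product_ite_forall_exists_of_subset (s : Finset α) {t R : Finset β}
    (hR : R ⊆ t) (w : K) :
    ∑ F ∈ (s ×ˢ t).powerset, (if ∀ v ∈ R, ∃ u ∈ s, (u, v) ∈ F then w ^ #F else 0)
      = ((1 + w) ^ #s - 1) ^ #R * (1 + w) ^ (#s * (#t - #R)) := by
  have hcond : ∀ F : Finset (α × β), (∀ v ∈ R, ∃ u ∈ s, (u, v) ∈ F) ↔
      ∀ v ∈ t, v ∈ R → ∃ u ∈ s, (u, v) ∈ F :=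
    fun F => ⟨fun h v _ hv => h v hv, fun h v hv => h v (hR hv) hv⟩
  simp_rw [hcond]
  rw [sum_powerset_product_ite_forall_exists, prod_ite, prod_const, prod_const,
    filter_mem_eq_inter, inter_eq_right.2 hR, filter_notMem_eq_sdiff, card_sdiff_of_subset hR,
    pow_mul]

end Powerset

theorem tsum_card_filter_mul_pow {α K : Type*} [CommSemiring K] [TopologicalSpace K]
    (A : Finset α) (f : α → ℕ) (w : K) :
    ∑' m, (#{a ∈ A | f a = m} : K) * w ^ m = ∑ a ∈ A, w ^ f a := by
  classical
  rw [sum_comp (fun m => w ^ m) f, tsum_eq_sum (s := A.image f)]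
  · exact sum_congr rfl fun m _ => (nsmul_eq_mul _ _).symm
  · intro m hm
    rw [filter_false_of_mem fun a ha (hfa : f a = m) => hm (hfa ▸ mem_image_of_mem f ha)]
    simp

theorem Relation.TransGen.mono_of_invariant {α : Type*} {r s : α → α → Prop} {T : α → Prop}
    (hT : ∀ a b, r a b → T b) (hrs : ∀ a b, T a → r a b → s a b) {a b : α}
    (h : Relation.TransGen r a b) (ha : T a) : Relation.TransGen s a b := by
  induction h using Relation.TransGen.head_induction_on with
  | single hab => exact .single (hrs _ _ ha hab)
  | head hac _ ih => exact .head (hrs _ _ ha hac) (ih (hT _ _ hac))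

section Digraph

variable {n : ℕ}

theorem dagLayer_zero (E : Finset (Fin n × Fin n)) : dagLayer E 0 = dagSources E := by
  simp [dagLayer, dagRemaining, sourcesIn, dagSources]

theorem dagLayer_one (E : Finset (Fin n × Fin n)) :
    dagLayer E 1 = sourcesIn E (dagSources E)ᶜ := by
  rw [dagLayer, dagRemaining, ← dagLayer, dagLayer_zero, dagRemaining, compl_eq_univ_sdiff]

theorem subset_univ_product_compl_dagSources (E : Finset (Fin n × Fin n)) :
    E ⊆ univ ×ˢ (dagSources E)ᶜ := fun p hp =>
  mem_product.2 ⟨mem_univ _, mem_compl.2 fun hsrc => (mem_filter.1 hsrc).2 p.1 hp⟩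

theorem DAcyclic.mono {E G : Finset (Fin n × Fin n)} (hE : DAcyclic E) (h : G ⊆ E) :
    DAcyclic G :=
  fun a hG => hE a (Relation.TransGen.mono (fun _ _ hxy => h hxy) a a hG)

section Split

variable {S : Finset (Fin n)} {A B : Finset (Fin n × Fin n)}

theorem dAcyclic_union_iff (hA : A ⊆ S ×ˢ Sᶜ) (hB : B ⊆ Sᶜ ×ˢ Sᶜ) :
    DAcyclic (A ∪ B) ↔ DAcyclic B := by
  refine ⟨fun h => h.mono subset_union_right, fun h a hcyc => ?_⟩
  have hsnd : ∀ x y, (x, y) ∈ A ∪ B → y ∈ Sᶜ := fun x y hxy => by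
    rcases mem_union.1 hxy with hxy | hxy
    exacts [(mem_product.1 (hA hxy)).2, (mem_product.1 (hB hxy)).2]
  have hfst : ∀ x y, x ∈ Sᶜ → (x, y) ∈ A ∪ B → (x, y) ∈ B := fun x y hx hxy =>
    (mem_union.1 hxy).resolve_left fun hxy' => mem_compl.1 hx (mem_product.1 (hA hxy')).1
  obtain ⟨b, -, hba⟩ := Relation.TransGen.tail'_iff.1 hcyc
  exact h a (hcyc.mono_of_invariant hsnd hfst (hsnd _ _ hba))

theorem sourcesIn_union_of_fst_notMem {V : Finset (Fin n)} (hA : ∀ p ∈ A, p.1 ∉ V) :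
    sourcesIn (A ∪ B) V = sourcesIn B V := by
  refine filter_congr fun v _ => forall₂_congr fun u hu => ?_
  simp only [mem_union, not_or, and_iff_right_iff_imp]
  exact fun _ huv => hA _ huv hu

theorem dagSources_union_eq_iff (hA : A ⊆ S ×ˢ Sᶜ) (hB : B ⊆ Sᶜ ×ˢ Sᶜ) :
    dagSources (A ∪ B) = S ↔ ∀ v ∈ sourcesIn B Sᶜ, ∃ u ∈ S, (u, v) ∈ A := by
  have hsnd : ∀ u v, (u, v) ∈ A ∪ B → v ∉ S := fun u v huv => by
    rcases mem_union.1 huv with huv | huv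
    exacts [mem_compl.1 (mem_product.1 (hA huv)).2, mem_compl.1 (mem_product.1 (hB huv)).2]
  simp only [sourcesIn, dagSources, mem_filter, mem_compl]
  constructor
  · rintro rfl v ⟨hv, hvB⟩
    simp only [mem_filter, mem_univ, true_and, not_forall, not_not] at hv
    obtain ⟨u, huv⟩ := hv
    have huA : (u, v) ∈ A := (mem_union.1 huv).resolve_right fun huB =>
      hvB u (mem_compl.1 (mem_product.1 (hB huB)).1) huB
    exact ⟨u, (mem_product.1 (hA huA)).1, huA⟩
  · intro hhit
    ext v
    simp only [mem_filter, mem_univ, true_and]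
    refine ⟨fun hno => by_contra fun hvS => ?_, fun hvS u huv => hsnd u v huv hvS⟩
    by_cases hvB : ∀ u, u ∉ S → (u, v) ∉ B
    · obtain ⟨u, -, hu⟩ := hhit v ⟨hvS, hvB⟩
      exact hno u (mem_union_left _ hu)
    · push Not at hvB
      obtain ⟨u, -, hu⟩ := hvB
      exact hno u (mem_union_right _ hu)

theorem dagLayers_union_iff (hA : A ⊆ S ×ˢ Sᶜ) (hB : B ⊆ Sᶜ ×ˢ Sᶜ) (j : ℕ) :
    (DAcyclic (A ∪ B) ∧ dagLayer (A ∪ B) 0 = S ∧ #(dagLayer (A ∪ B) 1) = j) ↔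
      (DAcyclic B ∧ #(sourcesIn B Sᶜ) = j) ∧ ∀ v ∈ sourcesIn B Sᶜ, ∃ u ∈ S, (u, v) ∈ A := by
  have hsecond : sourcesIn (A ∪ B) Sᶜ = sourcesIn B Sᶜ :=
    sourcesIn_union_of_fst_notMem fun p hp => notMem_compl.2 (mem_product.1 (hA hp)).1
  rw [dagLayer_zero, dagLayer_one, dAcyclic_union_iff hA hB]
  constructor
  · rintro ⟨hacyc, hS, hj⟩
    rw [hS, hsecond] at hj
    exact ⟨⟨hacyc, hj⟩, (dagSources_union_eq_iff hA hB).1 hS⟩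
  · rintro ⟨⟨hacyc, hj⟩, hhit⟩
    have hS := (dagSources_union_eq_iff hA hB).2 hhit
    exact ⟨hacyc, hS, by rw [hS, hsecond, hj]⟩

end Split

variable {k : ℕ} (e : Fin k ↪ Fin n)

theorem dAcyclic_map_iff (G : Finset (Fin k × Fin k)) :
    DAcyclic (G.map (e.prodMap e)) ↔ DAcyclic G := by
  refine ⟨fun h a ha => h (e a) (ha.lift e fun x y hxy => mem_map_of_mem (e.prodMap e) hxy),
    fun h x hx => ?_⟩
  -- `Function.invFun e` needs `Fin k` inhabited; the first edge of the cycle gives a vertex.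
  obtain ⟨y, hxy, -⟩ := Relation.TransGen.head'_iff.1 hx
  obtain ⟨⟨a, -⟩, -, -⟩ := mem_map.1 hxy
  have : Nonempty (Fin k) := ⟨a⟩
  refine h _ (hx.lift (Function.invFun e) fun x y hxy => ?_)
  obtain ⟨⟨a, b⟩, hab, hxy⟩ := mem_map.1 hxy
  obtain ⟨rfl, rfl⟩ := Prod.ext_iff.1 hxy
  simpa only [Function.onFun, Function.Embedding.coe_prodMap, Prod.map_apply,
    Function.leftInverse_invFun e.injective _] using hab

theorem sourcesIn_map (G : Finset (Fin k × Fin k)) :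
    sourcesIn (G.map (e.prodMap e)) (univ.map e) = (dagSources G).map e := by
  ext v
  simp only [sourcesIn, dagSources, mem_filter, mem_map, mem_univ, true_and]
  constructor
  · rintro ⟨⟨b, rfl⟩, h⟩
    exact ⟨b, fun u hu => h (e u) ⟨u, rfl⟩ ⟨(u, b), hu, rfl⟩, rfl⟩
  · rintro ⟨b, hb, rfl⟩
    refine ⟨⟨b, rfl⟩, fun u _ ⟨⟨x, y⟩, hxy, hxye⟩ => hb x ?_⟩
    rwa [e.injective (Prod.ext_iff.1 hxye).2] at hxy

open Classical in
theorem sum_dAcyclic_sourcesIn_map {K : Type*} [CommSemiring K] (j : ℕ) (w : K) :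
    ∑ B ∈ (univ.map e ×ˢ univ.map e).powerset with DAcyclic B ∧ #(sourcesIn B (univ.map e)) = j,
      w ^ #B = ∑ G : Finset (Fin k × Fin k) with DAcyclic G ∧ #(dagSources G) = j, w ^ #G := by
  have hprod : univ.map e ×ˢ univ.map e = univ.map (e.prodMap e) := by
    rw [← prodMap_map_product, univ_product_univ]
  have hmem : ∀ G : Finset (Fin k × Fin k), (DAcyclic (G.map (e.prodMap e)) ∧
      #(sourcesIn (G.map (e.prodMap e)) (univ.map e)) = j) ↔ DAcyclic G ∧ #(dagSources G) = j :=
    fun G => by rw [dAcyclic_map_iff, sourcesIn_map, card_map]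
  symm
  refine sum_nbij (fun G => G.map (e.prodMap e)) (fun G hG => ?_)
    (fun G _ G' _ h => map_injective _ h) (fun B hB => ?_) fun G _ => by rw [card_map]
  · rw [mem_filter] at hG ⊢
    exact ⟨mem_powerset.2 (hprod ▸ map_subset_map.2 (subset_univ G)), (hmem G).2 hG.2⟩
  · rw [mem_coe, mem_filter, mem_powerset, hprod, subset_map_iff] at hB
    obtain ⟨⟨G, -, rfl⟩, hB⟩ := hB
    exact ⟨G, by simpa using (hmem G).1 hB, rfl⟩

variable {K : Type*} [CommRing K]

open Classical in
theorem sum_dagLayer_eq_mul_sum_sourcesIn (S : Finset (Fin n)) (j : ℕ) (w : K) :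
    ∑ E with DAcyclic E ∧ dagLayer E 0 = S ∧ #(dagLayer E 1) = j, w ^ #E
      = ((1 + w) ^ #S - 1) ^ j * (1 + w) ^ (#S * (#Sᶜ - j)) *
        ∑ B ∈ (Sᶜ ×ˢ Sᶜ).powerset with DAcyclic B ∧ #(sourcesIn B Sᶜ) = j, w ^ #B := by
  have hsupport : ∀ E, (DAcyclic E ∧ dagLayer E 0 = S ∧ #(dagLayer E 1) = j) →
      E ∈ (univ ×ˢ Sᶜ).powerset := fun E hE => by
    rw [mem_powerset, ← hE.2.1, dagLayer_zero]
    exact subset_univ_product_compl_dagSources E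
  have hsplit : univ ×ˢ Sᶜ = S ×ˢ Sᶜ ∪ Sᶜ ×ˢ Sᶜ := by rw [← union_product, union_compl]
  have hdisj : Disjoint (S ×ˢ Sᶜ) (Sᶜ ×ˢ Sᶜ) := disjoint_product.2 (Or.inl disjoint_compl_right)
  have hfactor : ∀ A ∈ (S ×ˢ Sᶜ).powerset, ∀ B ∈ (Sᶜ ×ˢ Sᶜ).powerset,
      (if DAcyclic (A ∪ B) ∧ dagLayer (A ∪ B) 0 = S ∧ #(dagLayer (A ∪ B) 1) = j
        then w ^ #(A ∪ B) else 0)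
      = (if DAcyclic B ∧ #(sourcesIn B Sᶜ) = j then w ^ #B else 0) *
        (if ∀ v ∈ sourcesIn B Sᶜ, ∃ u ∈ S, (u, v) ∈ A then w ^ #A else 0) := by
    intro A hA B hB
    rw [mem_powerset] at hA hB
    rw [ite_zero_mul_ite_zero]
    refine if_congr (dagLayers_union_iff hA hB j) ?_ rfl
    rw [card_union_of_disjoint (disjoint_of_subset_left hA (disjoint_of_subset_right hB hdisj)),
      pow_add, mul_comm]
  have hhit : ∀ B ∈ (Sᶜ ×ˢ Sᶜ).powerset,
      (if DAcyclic B ∧ #(sourcesIn B Sᶜ) = j then w ^ #B else 0) *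
        ∑ A ∈ (S ×ˢ Sᶜ).powerset,
          (if ∀ v ∈ sourcesIn B Sᶜ, ∃ u ∈ S, (u, v) ∈ A then w ^ #A else 0)
      = (if DAcyclic B ∧ #(sourcesIn B Sᶜ) = j then w ^ #B else 0) *
        (((1 + w) ^ #S - 1) ^ j * (1 + w) ^ (#S * (#Sᶜ - j))) := by
    intro B _
    split_ifs with hB
    · rw [← hB.2]
      congr 1
      convert sum_powerset_product_ite_forall_exists_of_subset S
        (show sourcesIn B Sᶜ ⊆ Sᶜ from filter_subset _ _) w
    · rw [zero_mul, zero_mul]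
  rw [sum_filter, ← sum_subset (subset_univ _) fun E _ hE => if_neg fun hP => hE (hsupport E hP),
    hsplit, sum_powerset_union_of_disjoint hdisj,
    sum_congr rfl fun A hA => sum_congr rfl (hfactor A hA), sum_comm]
  simp_rw [← mul_sum]
  rw [sum_congr rfl hhit, ← sum_mul, sum_filter, mul_comm]

open Classical in
theorem sum_dagLayer_eq_mul_sum_dagSources (S : Finset (Fin n)) (j : ℕ) (w : K) :
    ∑ E with DAcyclic E ∧ dagLayer E 0 = S ∧ #(dagLayer E 1) = j, w ^ #E
      = ((1 + w) ^ #S - 1) ^ j * (1 + w) ^ (#S * (n - #S - j)) *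
        ∑ G : Finset (Fin (n - #S) × Fin (n - #S)) with DAcyclic G ∧ #(dagSources G) = j,
          w ^ #G := by
  have hcard : #Sᶜ = n - #S := by rw [card_compl, Fintype.card_fin]
  rw [sum_dagLayer_eq_mul_sum_sourcesIn, ← sum_dAcyclic_sourcesIn_map
    (Sᶜ.orderEmbOfFin hcard).toEmbedding, map_orderEmbOfFin_univ, hcard]

end Digraph

section Counts

variable {K : Type*} [CommSemiring K] [TopologicalSpace K]

open Classical in
theorem tsum_rcount_mul_pow (n n1 n2 : ℕ) (w : K) :
    ∑' m, (Rcount n n1 n2 m : K) * w ^ m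
      = ∑ E : Finset (Fin n × Fin n) with
          DAcyclic E ∧ #(dagLayer E 0) = n1 ∧ #(dagLayer E 1) = n2, w ^ #E := by
  rw [← tsum_card_filter_mul_pow]
  congr! 4 with m
  rw [Rcount, filter_filter]
  congr! 2 with E
  tauto

open Classical in
theorem tsum_dcount_mul_pow (n k : ℕ) (w : K) :
    ∑' m, (Dcount n m k : K) * w ^ m
      = ∑ E : Finset (Fin n × Fin n) with DAcyclic E ∧ #(dagSources E) = k, w ^ #E := by
  rw [← tsum_card_filter_mul_pow]
  congr! 4 with m
  rw [Dcount, filter_filter]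
  congr! 2 with E
  tauto

end Counts

theorem first_two_layers_identity_general (n n1 n2 : ℕ) (w : ℝ) :
    ∑' m : ℕ, (Rcount n n1 n2 m : ℝ) * w ^ m
      = (n.choose n1 : ℝ) * ((1 + w) ^ n1 - 1) ^ n2 * (1 + w) ^ (n1 * (n - n1 - n2))
        * ∑' m : ℕ, (Dcount (n - n1) m n2 : ℝ) * w ^ m := by
  classical
  rw [tsum_rcount_mul_pow, tsum_dcount_mul_pow, ← sum_fiberwise_of_maps_to
    (g := fun E => dagLayer E 0) (t := powersetCard n1 univ) fun E hE =>
      mem_powersetCard_univ.2 (mem_filter.1 hE).2.2.1]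
  have hfiber : ∀ S : Finset (Fin n), S ∈ powersetCard n1 univ →
      ∑ E ∈ {E : Finset (Fin n × Fin n) |
          DAcyclic E ∧ #(dagLayer E 0) = n1 ∧ #(dagLayer E 1) = n2} with dagLayer E 0 = S, w ^ #E
      = ((1 + w) ^ n1 - 1) ^ n2 * (1 + w) ^ (n1 * (n - n1 - n2)) *
        ∑ G : Finset (Fin (n - n1) × Fin (n - n1)) with DAcyclic G ∧ #(dagSources G) = n2,
          w ^ #G := by
    intro S hS
    obtain rfl := mem_powersetCard_univ.1 hS
    rw [← sum_dagLayer_eq_mul_sum_dagSources, filter_filter]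
    congr! 2 with E
    exact ⟨fun ⟨⟨hE, _, h2⟩, hS⟩ => ⟨hE, hS, h2⟩, fun ⟨hE, hS, h2⟩ => ⟨⟨hE, hS ▸ rfl, h2⟩, hS⟩⟩
  rw [sum_congr rfl hfiber, sum_const, card_powersetCard, card_univ, Fintype.card_fin,
    nsmul_eq_mul]
  ring

/-- For $n \ge n_1 + n_2$ with $n_1 \ge 1$:
$\sum_m R(n;n_1,n_2;m) w^m = \binom{n}{n_1} ((1+w)^{n_1}-1)^{n_2}
(1+w)^{n_1(n-n_1-n_2)} \sum_m D(n-n_1,m,n_2) w^m$ (an identity of polynomials in $w$,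
stated here as an identity of functions of a real variable $w$). -/
theorem first_two_layers_identity (n n1 n2 : ℕ) (h1 : 1 ≤ n1) (h : n1 + n2 ≤ n) (w : ℝ) :
    ∑' m : ℕ, (Rcount n n1 n2 m : ℝ) * w ^ m
      = (n.choose n1 : ℝ) * ((1 + w) ^ n1 - 1) ^ n2 * (1 + w) ^ (n1 * (n - n1 - n2))
        * ∑' m : ℕ, (Dcount (n - n1) m n2 : ℝ) * w ^ m :=
  first_two_layers_identity_general n n1 n2 w
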